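/- arXiv:2309.05152 — 2 statements merged into one kernel-verified Lean document; each statement's English description precedes it below -/
import Mathlib

section
/- Let R be a Noetherian integrally closed integral domain with fraction field K. Then R equals the intersection, inside K, of its localizations at all height-one prime ideals: R = ⋂_{ht p = 1} R_p. Equivalently (algebraic Hartogs' lemma), if U ⊆ Spec R is an open subset whose complement contains no prime of height ≤ 1, then restriction of functions O(Spec R) → O(U) is bijective. -/
/-!
For `y ∈ K` consider the ideal of denominators `(R : y) = {r | r y ∈ R}`. If `x ∉ R`, Noetherianity
yields `y ∉ R` with `(R : x) ≤ (R : y)` and `(R : y)` maximal among such ideals; maximality makes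
`p = (R : y)` prime. In `R_p` we then have `y 𝔪 ⊆ R_p` but `y ∉ R_p`. If `y 𝔪 ⊆ 𝔪`, then `y` is
integral over `R_p` since `𝔪` is finitely generated, contradicting integral closedness; otherwise
`y t` is a unit for some `t ∈ 𝔪`, and then `𝔪 = (t)`. Hence `R_p` is a discrete valuation ring, so
`p` has height one, while `x ∉ R_p` because `(R : x) ≤ p`.
-/

open IsLocalRing

section Denominators

variable (R : Type*) {K : Type*} [CommRing R] [Field K] [Algebra R K]

def denominatorIdeal (y : K) : Ideal R := (1 : Submodule R K).colon {y}

variable {R}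

theorem mem_denominatorIdeal {y : K} {r : R} :
    r ∈ denominatorIdeal R y ↔ ∃ c : R, y * algebraMap R K r = algebraMap R K c := by
  rw [denominatorIdeal, Submodule.mem_colon_singleton, Submodule.mem_one, Algebra.smul_def,
    mul_comm]
  exact exists_congr fun _ ↦ eq_comm

theorem denominatorIdeal_eq_top_iff {y : K} :
    denominatorIdeal R y = ⊤ ↔ y ∈ (algebraMap R K).range := by
  rw [Ideal.eq_top_iff_one, denominatorIdeal, Submodule.mem_colon_singleton, one_smul,
    Submodule.mem_one, RingHom.mem_range]

theorem denominatorIdeal_ne_bot [IsDomain R] [IsFractionRing R K] (y : K) :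
    denominatorIdeal R y ≠ ⊥ := by
  obtain ⟨⟨a, s⟩, hs⟩ := IsLocalization.surj (nonZeroDivisors R) y
  exact (Submodule.ne_bot_iff _).mpr
    ⟨s, mem_denominatorIdeal.mpr ⟨a, hs⟩, nonZeroDivisors.ne_zero s.2⟩

theorem denominatorIdeal_le_denominatorIdeal_mul (y : K) (r : R) :
    denominatorIdeal R y ≤ denominatorIdeal R (y * algebraMap R K r) := by
  intro t ht
  obtain ⟨c, hc⟩ := mem_denominatorIdeal.mp ht
  exact mem_denominatorIdeal.mpr ⟨c * r, by rw [map_mul, mul_right_comm, hc]⟩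

theorem isPrime_denominatorIdeal {y : K} (hy : y ∉ (algebraMap R K).range)
    (hmax : ∀ z ∉ (algebraMap R K).range, ¬denominatorIdeal R y < denominatorIdeal R z) :
    (denominatorIdeal R y).IsPrime := by
  refine ⟨mt denominatorIdeal_eq_top_iff.mp hy, fun {r s} hrs ↦ or_iff_not_imp_left.mpr fun hr ↦ ?_⟩
  have hyr : y * algebraMap R K r ∉ (algebraMap R K).range := by
    rintro ⟨c, hc⟩
    exact hr (mem_denominatorIdeal.mpr ⟨c, hc.symm⟩)
  have heq : denominatorIdeal R (y * algebraMap R K r) = denominatorIdeal R y :=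
    ((denominatorIdeal_le_denominatorIdeal_mul y r).eq_or_lt.resolve_right (hmax _ hyr)).symm
  obtain ⟨c, hc⟩ := mem_denominatorIdeal.mp hrs
  exact heq ▸ mem_denominatorIdeal.mpr ⟨c, by rw [mul_assoc, ← map_mul, hc]⟩

theorem exists_isPrime_denominatorIdeal_le [IsNoetherianRing R] {x : K}
    (hx : x ∉ (algebraMap R K).range) :
    ∃ y : K, denominatorIdeal R x ≤ denominatorIdeal R y ∧ (denominatorIdeal R y).IsPrime := by
  obtain ⟨-, ⟨y, hy, hxy, rfl⟩, hmax⟩ := set_has_maximal_iff_noetherian.mpr inferInstance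
    {J | ∃ y ∉ (algebraMap R K).range, denominatorIdeal R x ≤ denominatorIdeal R y ∧
      denominatorIdeal R y = J} ⟨_, x, hx, le_rfl, rfl⟩
  exact ⟨y, hxy, isPrime_denominatorIdeal hy fun z hz hlt ↦
    hmax _ ⟨z, hz, hxy.trans hlt.le, rfl⟩ hlt⟩

theorem denominatorIdeal_eq_maximalIdeal_of_isLocalization {p : Ideal R} [p.IsPrime]
    {A : Type*} [CommRing A] [Algebra R A] [IsLocalization.AtPrime A p] [IsLocalRing A]
    [Algebra A K] [IsScalarTower R A K] {y : K} (hp : denominatorIdeal R y = p) :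
    denominatorIdeal A y = maximalIdeal A := by
  have hle : maximalIdeal A ≤ denominatorIdeal A y := by
    rw [← IsLocalization.AtPrime.map_eq_maximalIdeal p, Ideal.map_le_iff_le_comap, ← hp]
    intro r hr
    obtain ⟨c, hc⟩ := mem_denominatorIdeal.mp hr
    refine mem_denominatorIdeal.mpr ⟨algebraMap R A c, ?_⟩
    rwa [← IsScalarTower.algebraMap_apply, ← IsScalarTower.algebraMap_apply]
  have hne : denominatorIdeal A y ≠ ⊤ := by
    rintro htop
    obtain ⟨z, hz⟩ := denominatorIdeal_eq_top_iff.mp htop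
    obtain ⟨⟨a, s⟩, hs⟩ := IsLocalization.surj p.primeCompl z
    have hsy : (s : R) ∈ denominatorIdeal R y := mem_denominatorIdeal.mpr ⟨a, by
      rw [← hz, IsScalarTower.algebraMap_apply R A K, IsScalarTower.algebraMap_apply R A K,
        ← map_mul]
      exact congrArg _ hs⟩
    exact s.2 (hp ▸ hsy)
  exact ((maximalIdeal.isMaximal A).eq_of_le hne hle).symm

end Denominators

section LocalRing

variable {A K : Type*} [CommRing A] [IsLocalRing A] [Field K] [Algebra A K]
  [IsFractionRing A K]

theorem maximalIdeal_eq_span_of_denominatorIdeal_eq {y : K}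
    (hy : denominatorIdeal A y = maximalIdeal A) {t z : A} (ht : t ∈ maximalIdeal A)
    (hz : y * algebraMap A K t = algebraMap A K z) (hzu : IsUnit z) :
    maximalIdeal A = Ideal.span {t} := by
  refine le_antisymm (fun w hw ↦ ?_) ((Ideal.span_singleton_le_iff_mem _).mpr ht)
  obtain ⟨c, hc⟩ := mem_denominatorIdeal.mp (hy ▸ hw)
  have hwz : w * z = c * t := IsFractionRing.injective A K <| by
    rw [map_mul, map_mul, ← hz, ← hc]
    ring
  obtain ⟨u, rfl⟩ := hzu
  exact Ideal.mem_span_singleton'.mpr ⟨c * ↑u⁻¹, by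
    rw [mul_right_comm, ← hwz, mul_assoc, Units.mul_inv, mul_one]⟩

theorem maximalIdeal_isPrincipal_of_denominatorIdeal_eq [IsDomain A] [IsNoetherianRing A]
    [IsIntegrallyClosed A] {y : K} (hy : denominatorIdeal A y = maximalIdeal A) :
    (maximalIdeal A).IsPrincipal := by
  by_cases hbot : maximalIdeal A = ⊥
  · rw [hbot]
    exact bot_isPrincipal
  let M := Submodule.map (Algebra.linearMap A K) (maximalIdeal A)
  by_cases hstable : ∀ n ∈ M, y • n ∈ M
  · have hM : M ≠ ⊥ := fun h ↦ hbot <| Submodule.map_injective_of_injective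
      (IsFractionRing.injective A K) (h.trans (Submodule.map_bot _).symm)
    have hint : IsIntegral A y :=
      isIntegral_of_smul_mem_submodule M hM ((IsNoetherian.noetherian _).map _) y hstable
    have := denominatorIdeal_eq_top_iff.mpr (IsIntegrallyClosed.isIntegral_iff.mp hint)
    exact absurd (hy ▸ this) (maximalIdeal.isMaximal A).ne_top
  push Not at hstable
  obtain ⟨n, hn, hyt⟩ := hstable
  obtain ⟨t, ht, rfl⟩ := Submodule.mem_map.mp hn
  obtain ⟨z, hz⟩ := mem_denominatorIdeal.mp (hy ▸ ht)
  have hzu : IsUnit z := by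
    by_contra hzu
    exact hyt ⟨z, (mem_maximalIdeal z).mpr hzu, hz.symm⟩
  exact ⟨t, maximalIdeal_eq_span_of_denominatorIdeal_eq hy ht hz hzu⟩

end LocalRing

theorem Ideal.height_eq_one_of_isDiscreteValuationRing {R : Type*} [CommRing R] (p : Ideal R)
    [p.IsPrime] (A : Type*) [CommRing A] [IsDomain A] [Algebra R A] [IsLocalization.AtPrime A p]
    [IsDiscreteValuationRing A] : p.height = 1 := by
  have := IsLocalization.AtPrime.ringKrullDim_eq_height p A
  rw [IsDiscreteValuationRing.ringKrullDim_eq_one] at this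
  exact_mod_cast this.symm

theorem height_denominatorIdeal_eq_one {R K : Type*} [CommRing R] [IsDomain R]
    [IsNoetherianRing R] [IsIntegrallyClosed R] [Field K] [Algebra R K] [IsFractionRing R K]
    {y : K} [(denominatorIdeal R y).IsPrime] : (denominatorIdeal R y).height = 1 := by
  set p := denominatorIdeal R y with hp
  have hle : p.primeCompl ≤ nonZeroDivisors R := p.primeCompl_le_nonZeroDivisors
  -- `R_p` realised inside `K`, so that `K` is also its fraction field
  let A := Localization.subalgebra.ofField K p.primeCompl hle
  have : IsLocalRing A := IsLocalization.AtPrime.isLocalRing A p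
  have : IsNoetherianRing A := IsLocalization.isNoetherianRing p.primeCompl A inferInstance
  have : IsIntegrallyClosed A := isIntegrallyClosed_of_isLocalization A p.primeCompl hle
  have hmax : maximalIdeal A ≠ ⊥ := by
    rw [← IsLocalization.AtPrime.map_eq_maximalIdeal p, Ne,
      Ideal.map_eq_bot_iff_of_injective (IsLocalization.injective A hle)]
    exact denominatorIdeal_ne_bot y
  have : IsDiscreteValuationRing A :=
    ((IsDiscreteValuationRing.TFAE A (mt isField_iff_maximalIdeal_eq.mp hmax)).out 0 4).mpr
      (maximalIdeal_isPrincipal_of_denominatorIdeal_eq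
        (denominatorIdeal_eq_maximalIdeal_of_isLocalization hp.symm))
  exact p.height_eq_one_of_isDiscreteValuationRing A

/-- A Noetherian integrally closed domain `R` is the intersection, inside its fraction field
`K`, of its localizations at all height-one primes: an element `x ∈ K` lies in (the image of)
`R` if and only if for every prime `p` of height one, `x` lies in `R_p`, i.e. `x` can be
written with denominator outside `p`. -/
theorem stmt4 {R : Type*} [CommRing R] [IsDomain R] [IsNoetherianRing R] [IsIntegrallyClosed R]
    {K : Type*} [Field K] [Algebra R K] [IsFractionRing R K] (x : K) :
    (∃ r : R, algebraMap R K r = x) ↔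
      ∀ p : PrimeSpectrum R, Order.height p = 1 →
        ∃ a s : R, s ∉ p.asIdeal ∧ x * algebraMap R K s = algebraMap R K a := by
  refine ⟨?_, fun hx ↦ ?_⟩
  · rintro ⟨r, rfl⟩ p -
    exact ⟨r, 1, (Ideal.ne_top_iff_one _).mp p.isPrime.ne_top, by simp⟩
  by_contra hxR
  obtain ⟨y, hxy, hy⟩ := exists_isPrime_denominatorIdeal_le hxR
  obtain ⟨a, s, hs, hxs⟩ := hx ⟨_, hy⟩ <| by
    rw [← PrimeSpectrum.height_eq_orderHeight]
    exact height_denominatorIdeal_eq_one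
  exact hs (hxy (mem_denominatorIdeal.mpr ⟨a, hxs⟩))
end

section
/- Let X be a scheme admitting a finite cover by affine open subschemes X_1, …, X_n. Let (R_i)_{i ∈ I} be an arbitrary family of commutative rings and, for each i, let f_i : Spec R_i → X be a morphism whose image is contained in some X_{j(i)}. Then there exists a morphism g : Spec(∏_{i ∈ I} R_i) → X such that for every i, the composite of g with the morphism Spec R_i → Spec(∏_{i ∈ I} R_i) induced by the coordinate projection ∏_i R_i → R_i equals f_i. -/
open CategoryTheory AlgebraicGeometry
open CategoryTheory.Limits

/-!
The affine case is the adjunction `Hom(A, Π Rᵢ) = Π Hom(A, Rᵢ)`. In general, group the indices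
by the affine open `X_j` their point lands in: `Π Rᵢ = Π_j Π_{i ↦ j} Rᵢ`, and since there are
finitely many `j`, `Spec` of this product is the disjoint union of the `Spec (Π_{i ↦ j} Rᵢ)`,
on each of which the affine case applies.
-/

namespace AlgebraicGeometry

universe u

variable {ι : Type u} (R : ι → CommRingCat.{u}) {X : Scheme.{u}}

lemma IsAffineOpen.exists_pointsPi_eq {U : X.Opens} (hU : IsAffineOpen U)
    (f : ∀ i, Spec (R i) ⟶ X) (hf : ∀ i, Set.range (f i) ⊆ U) :
    ∃ g, pointsPi R X g = f := by
  have : IsAffine U := hU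
  obtain ⟨g, hg⟩ := pointsPi_surjective_of_isAffine R U
    fun i ↦ IsOpenImmersion.lift U.ι (f i) (by simpa using hf i)
  refine ⟨g ≫ U.ι, funext fun i ↦ ?_⟩
  have hgi : Spec.map _ ≫ g = _ := congrFun hg i
  rw [pointsPi, ← Category.assoc, hgi, IsOpenImmersion.lift_fac]

lemma exists_pointsPi_eq_of_fiberwise {J : Type u} [Finite J] (c : ι → J)
    (f : ∀ i, Spec (R i) ⟶ X)
    (hfib : ∀ j, ∃ g : Spec (.of (Π i : {i // c i = j}, R i)) ⟶ X,
      pointsPi (fun i : {i // c i = j} ↦ R i) X g = fun i : {i // c i = j} ↦ f i.1) :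
    ∃ g, pointsPi R X g = f := by
  choose g hg using hfib
  let R' (j : J) := CommRingCat.of (Π i : {i // c i = j}, R i)
  let regroup : (Π j, R' j) →+* Π i, R i :=
    RingHom.pi fun i ↦ (Pi.evalRingHom _ ⟨i, rfl⟩).comp (Pi.evalRingHom (R' ·) (c i))
  refine ⟨Spec.map (CommRingCat.ofHom regroup) ≫ inv (sigmaSpec R') ≫ Sigma.desc g,
    funext fun i ↦ ?_⟩
  have hregroup : (Pi.evalRingHom (R ·) i).comp regroup =
      (Pi.evalRingHom _ ⟨i, rfl⟩).comp (Pi.evalRingHom (R' ·) (c i)) := rfl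
  rw [pointsPi, ← Spec.map_comp_assoc, ← CommRingCat.ofHom_comp, hregroup,
    CommRingCat.ofHom_comp, Spec.map_comp_assoc, ← ι_sigmaSpec R', Category.assoc,
    IsIso.hom_inv_id_assoc, Sigma.ι_desc]
  exact congrFun (hg (c i)) (⟨i, rfl⟩ : {i' // c i' = c i})

end AlgebraicGeometry

theorem stmt16_general {I : Type} (R : I → Type) [∀ i, CommRing (R i)]
    (X : Scheme.{0}) (n : ℕ) (U : Fin n → X.Opens)
    (hU : ∀ j, IsAffineOpen (U j))
    (f : ∀ i, Spec (CommRingCat.of (R i)) ⟶ X)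
    (hf : ∀ i, ∃ j, ∀ x, (f i).base x ∈ U j) :
    ∃ g : Spec (CommRingCat.of (∀ i, R i)) ⟶ X,
      ∀ i, Spec.map (CommRingCat.ofHom (Pi.evalRingHom R i)) ≫ g = f i := by
  choose c hc using hf
  obtain ⟨g, hg⟩ := exists_pointsPi_eq_of_fiberwise (fun i ↦ .of (R i)) c f fun j ↦
    (hU j).exists_pointsPi_eq _ (fun i : {i // c i = j} ↦ f i.1) fun i ↦ by
      obtain ⟨i, rfl⟩ := i
      rintro _ ⟨x, rfl⟩
      exact hc i x
  exact ⟨g, congrFun hg⟩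

/-- Let `X` be a scheme with a finite affine open cover `U₁, …, Uₙ`, `(Rᵢ)` an arbitrary family
of commutative rings, and `fᵢ : Spec Rᵢ → X` morphisms each of whose image lands in some member
of the cover.  Then there is a morphism `g : Spec (∏ i, Rᵢ) → X` whose composite with each
`Spec Rᵢ → Spec (∏ i, Rᵢ)` (induced by the coordinate projection) is `fᵢ`. -/
theorem stmt16 {I : Type} (R : I → Type) [∀ i, CommRing (R i)]
    (X : Scheme.{0}) (n : ℕ) (U : Fin n → X.Opens)
    (hU : ∀ j, IsAffineOpen (U j)) (hcover : (⨆ j, U j) = ⊤)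
    (f : ∀ i, Spec (CommRingCat.of (R i)) ⟶ X)
    (hf : ∀ i, ∃ j, ∀ x, (f i).base x ∈ U j) :
    ∃ g : Spec (CommRingCat.of (∀ i, R i)) ⟶ X,
      ∀ i, Spec.map (CommRingCat.ofHom (Pi.evalRingHom R i)) ≫ g = f i :=
  stmt16_general R X n U hU f hf
end
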